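/- Let L be a nilpotent 1-shifted curved Lie superalgebra and let y, z be odd elements of L^{−1} such that ad(z) ad(y)ⁿ z = 0 for all n ≥ 0. Then the Baker–Campbell–Hausdorff composition satisfies y ∗ z = y + (ad(y)/(1 − e^{−ad(y)})) z. -/

import Mathlib

noncomputable section

/-- The sign `(-1)^p` associated to a parity `p ∈ ℤ/2`. -/
def sgn (p : ZMod 2) : ℚ := if p = 0 then 1 else -1

/-- A 1-shifted curved Lie superalgebra over `ℚ`:
a `ℤ × ℤ/2`-graded superspace (`comp k p` is the component of ghost number `k`
and parity `p`), equipped with an odd curvature `R ∈ L¹`, an odd differential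
`d : Lᵏ → Lᵏ⁺¹` and an odd antibracket `(-,-) : Lᵏ × Lˡ → L^{k+l+1}`, satisfying
the Bianchi identity, the curvature identity, the Leibniz identity, antisymmetry
and the Jacobi rule. -/
structure CurvedLS where
  V : Type
  [grp : AddCommGroup V]
  [mod : Module ℚ V]
  comp : ℤ → ZMod 2 → Submodule ℚ V
  R : V
  R_mem : R ∈ comp 1 1
  d : V →ₗ[ℚ] V
  d_mem : ∀ (k : ℤ) (p : ZMod 2) (x : V), x ∈ comp k p → d x ∈ comp (k + 1) (p + 1)
  br : V →ₗ[ℚ] V →ₗ[ℚ] V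
  br_mem : ∀ (k l : ℤ) (p q : ZMod 2) (x y : V), x ∈ comp k p → y ∈ comp l q →
    br x y ∈ comp (k + l + 1) (p + q + 1)
  bianchi : d R = 0
  curvId : ∀ x : V, d (d x) = br R x
  leibniz : ∀ (p : ZMod 2) (x y : V), x ∈ (⨆ k : ℤ, comp k p) →
    d (br x y) = br (d x) y + (- sgn p) • br x (d y)
  antisym : ∀ (p q : ZMod 2) (x y : V), x ∈ (⨆ k : ℤ, comp k p) → y ∈ (⨆ k : ℤ, comp k q) →
    br y x = (- sgn ((p + 1) * (q + 1))) • br x y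
  jacobi : ∀ (p : ZMod 2) (x y z : V), x ∈ (⨆ k : ℤ, comp k p) →
    br x (br y z) = br (br x y) z + (- sgn p) • br y (br x z)

attribute [instance] CurvedLS.grp CurvedLS.mod

namespace CurvedLS

variable (L : CurvedLS)

/-- The submodule of elements of parity `p` (of arbitrary ghost number). -/
def P (p : ZMod 2) : Submodule ℚ L.V := ⨆ k : ℤ, L.comp k p

/-- The adjoint operator `ad x = (x, -)`. -/
def ad (x : L.V) : Module.End ℚ L.V := L.br x

/-- A Maurer–Cartan element: an even element of ghost number 0 with
`R + dx + ½(x,x) = 0`. -/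
def IsMC (x : L.V) : Prop := x ∈ L.comp 0 0 ∧ L.R + L.d x + (1 / 2 : ℚ) • L.br x x = 0

/-- A curved Lie superalgebra is nilpotent if `ad x` is nilpotent for every odd `x`. -/
def NilpotentCLS : Prop := ∀ x ∈ L.P 1, IsNilpotent (L.ad x)

/-- The exponential `e^{ad y}` (a finite sum when `ad y` is nilpotent). -/
def expAd (y : L.V) : Module.End ℚ L.V := ∑ᶠ n : ℕ, (n.factorial : ℚ)⁻¹ • (L.ad y) ^ n

/-- The gauge action: `x • y = x + Σ_{n≥0} (−ad y)ⁿ(dy + (x,y))/(n+1)!`. -/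
def gauge (x y : L.V) : L.V :=
  x + ∑ᶠ n : ℕ, ((n + 1).factorial : ℚ)⁻¹ • ((-1 : ℚ) ^ n • (((L.ad y) ^ n) (L.d y + L.br x y)))

/-- The operator `ad y / (1 - e^{-ad y}) = Σ_n B'_n (ad y)ⁿ/n!`, where `B'_n`
are the Bernoulli numbers with `B'₁ = 1/2`. -/
def toddOp (y : L.V) : Module.End ℚ L.V :=
  ∑ᶠ n : ℕ, bernoulli' n • ((n.factorial : ℚ)⁻¹ • (L.ad y) ^ n)

end CurvedLS

/-!
Put `x = ad y` and `a = ad w` with `w = (ad y/(1 − e^{−ad y})) z`. By the Jacobi rule, `ad` turns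
bracketing with the odd element `y` into the commutator `[x, -]`, so `[x, -]ⁿ a = ad((ad y)ⁿ w)`.
The hypothesis on `z` makes the `ad y`-orbit of `z` span an abelian subspace of odd elements, so
these operators commute with each other and are nilpotent.

For such `x` and `a` in any `ℚ`-algebra, `e^{x+a} = e^x e^V` with `V = ((1 − e^{−[x,-]})/[x,-]) a`.
With a formal parameter `t`, both `e^{t(x+a)}` and `e^{tx} e^{V(t)}`, where
`V(t) = ∫₀ᵗ e^{−s[x,-]} a ds`, solve `G' = (x + a) G`, `G(0) = 1`: the summands of `V(t)` commute,
so `(e^{V(t)})' = V'(t) e^{V(t)}`, and `e^{tx} V'(t) e^{−tx} = a`. At `t = 1`, the identity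
`((1 − e^{−T})/T) · (T/(1 − e^{−T})) = 1` turns `V` back into `ad z`.
-/

section Bernoulli

open PowerSeries

def oneSubExpNegDivX : PowerSeries ℚ := mk fun n => (-1) ^ n / (n + 1).factorial

theorem oneSubExpNegDivX_mul_X : oneSubExpNegDivX * X = 1 - evalNegHom (exp ℚ) := by
  ext (_ | n)
  · rw [coeff_zero_mul_X, map_sub, coeff_one, if_pos rfl, evalNegHom, coeff_rescale, coeff_exp]
    simp
  · simp only [coeff_succ_mul_X, map_sub, coeff_one, evalNegHom, coeff_rescale, coeff_exp,
      oneSubExpNegDivX, coeff_mk]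
    simp [pow_succ, div_eq_mul_inv]

theorem oneSubExpNegDivX_mul_bernoulli' : oneSubExpNegDivX * bernoulli'PowerSeries ℚ = 1 := by
  have hXexp : (X * exp ℚ : PowerSeries ℚ) ≠ 0 :=
    mul_ne_zero X_ne_zero fun h => by simpa using congrArg constantCoeff h
  refine mul_right_cancel₀ hXexp ?_
  calc oneSubExpNegDivX * bernoulli'PowerSeries ℚ * (X * exp ℚ)
      = bernoulli'PowerSeries ℚ * ((oneSubExpNegDivX * X) * exp ℚ) := by ring
    _ = bernoulli'PowerSeries ℚ * (exp ℚ - 1) := by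
      rw [oneSubExpNegDivX_mul_X, sub_mul, one_mul, mul_comm (evalNegHom _), exp_mul_exp_neg_eq_one]
    _ = 1 * (X * exp ℚ) := by rw [bernoulli'PowerSeries_mul_exp_sub_one, one_mul]

end Bernoulli

open Polynomial Finset IsNilpotent

section TruncatedSeries

variable {B : Type*} [Ring B] [Algebra ℚ B]

theorem aeval_trunc (T : B) (K : ℕ) (f : PowerSeries ℚ) :
    aeval T (PowerSeries.trunc K f) = ∑ i ∈ range K, PowerSeries.coeff i f • T ^ i := by
  simp only [aeval_def, PowerSeries.eval₂_trunc_eq_sum_range, Algebra.smul_def]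

theorem Polynomial.aeval_eq_zero_of_coeff_lt {T : B} {K : ℕ} (hT : T ^ K = 0) {p : ℚ[X]}
    (hp : ∀ i < K, p.coeff i = 0) : aeval T p = 0 := by
  rw [aeval_eq_sum_range]
  refine sum_eq_zero fun i _ => ?_
  rcases lt_or_ge i K with hi | hi
  · rw [hp i hi, zero_smul]
  · rw [pow_eq_zero_of_le hi hT, smul_zero]

theorem aeval_trunc_mul_aeval_trunc {T : B} {K : ℕ} (hT : T ^ K = 0) (f g : PowerSeries ℚ) :
    aeval T (PowerSeries.trunc K f) * aeval T (PowerSeries.trunc K g) =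
      aeval T (PowerSeries.trunc K (f * g)) := by
  rw [← map_mul, ← sub_eq_zero, ← map_sub]
  refine aeval_eq_zero_of_coeff_lt hT fun i hi => ?_
  have := congrArg (coeff · i) (PowerSeries.trunc_trunc_mul_trunc (n := K) f g)
  rw [coeff_sub, ← this, PowerSeries.coeff_trunc, if_pos hi, ← Polynomial.coe_mul,
    Polynomial.coeff_coe, sub_self]

theorem finsum_smul_pow_eq_sum {T : B} {K : ℕ} (hT : T ^ K = 0) (c : ℕ → ℚ) :
    ∑ᶠ n, c n • T ^ n = ∑ n ∈ range K, c n • T ^ n := by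
  refine finsum_eq_sum_of_support_subset _ fun n hn => ?_
  by_contra hnK
  simp only [coe_range, Set.mem_Iio, not_lt] at hnK
  exact hn (by simp only [pow_eq_zero_of_le hnK hT, smul_zero])

end TruncatedSeries

attribute [local instance] IsAddTorsionFree.of_module_rat

section ExpPolynomial

variable {A : Type*} [Ring A] [Algebra ℚ A]

theorem mul_natCast_eq_smul (b : A) (n : ℕ) : b * n = (n : ℚ) • b := by
  rw [← nsmul_eq_mul', Nat.cast_smul_eq_nsmul]

theorem IsNilpotent.commute_exp_of_commute {a b : A} (h : Commute a b) : Commute a (exp b) :=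
  Commute.sum_right _ _ _ fun i _ => (h.pow_right i).smul_right _

omit [Algebra ℚ A] in
theorem Polynomial.commute_monomial_of_commute {b c : A} (h : Commute b c) (i j : ℕ) :
    Commute (monomial i b) (monomial j c) := by
  unfold Commute SemiconjBy
  rw [monomial_mul_monomial, monomial_mul_monomial, h.eq, add_comm]

omit [Algebra ℚ A] in
theorem Polynomial.derivative_pow_succ_of_commute {P : A[X]} (h : Commute P (derivative P))
    (n : ℕ) : derivative (P ^ (n + 1)) = (n + 1) • (derivative P * P ^ n) := by
  induction n with
  | zero => simp
  | succ n ih =>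
    rw [pow_succ' P (n + 1), derivative_mul, ih, mul_smul_comm, ← mul_assoc, h.eq, mul_assoc,
      ← pow_succ', succ_nsmul _ (n + 1), add_comm]

theorem Polynomial.derivative_exp {P : A[X]} (hP : IsNilpotent P) (h : Commute P (derivative P)) :
    derivative (exp P) = derivative P * exp P := by
  obtain ⟨n, hn⟩ := hP
  conv_lhs => rw [exp_eq_sum (pow_eq_zero_of_le n.le_succ hn)]
  rw [exp_eq_sum hn, map_sum, sum_range_succ', Finset.mul_sum]
  simp only [derivative_smul, derivative_pow_succ_of_commute h, pow_zero, derivative_one,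
    smul_zero, add_zero, mul_smul_comm]
  refine sum_congr rfl fun i _ => ?_
  rw [← Nat.cast_smul_eq_nsmul ℚ, smul_smul, Nat.factorial_succ]
  congr 1
  push_cast
  field_simp

theorem Polynomial.eval_exp {P : A[X]} (hP : IsNilpotent P) {s : A} (hs : ∀ a, Commute a s) :
    (exp P).eval s = exp (P.eval s) :=
  map_exp hP (eval₂RingHom' (RingHom.id A) s hs)

theorem Polynomial.coeff_zero_exp {P : A[X]} (hP : IsNilpotent P) (h0 : P.coeff 0 = 0) :
    (exp P).coeff 0 = 1 := by
  rw [coeff_zero_eq_eval_zero, eval_exp hP Commute.zero_right, ← coeff_zero_eq_eval_zero, h0,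
    exp_zero]

omit [Algebra ℚ A] in
theorem Polynomial.isNilpotent_C_mul_X {a : A} (ha : IsNilpotent a) : IsNilpotent (C a * X) :=
  (commute_X (C a)).symm.isNilpotent_mul_right (ha.map C)

theorem Polynomial.derivative_exp_C_mul_X {a : A} (ha : IsNilpotent a) :
    derivative (exp (C a * X)) = C a * exp (C a * X) := by
  have hcomm : Commute (C a * X) (C a) := (Commute.refl (C a)).mul_left (commute_X (C a))
  rw [derivative_exp (isNilpotent_C_mul_X ha) (by rwa [derivative_C_mul_X]), derivative_C_mul_X]

theorem Polynomial.coeff_zero_exp_C_mul_X {a : A} (ha : IsNilpotent a) :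
    (exp (C a * X)).coeff 0 = 1 :=
  coeff_zero_exp (isNilpotent_C_mul_X ha) (by simp)

-- `e^{-ta} G` has derivative zero.
theorem Polynomial.eq_exp_C_mul_X_of_derivative {a : A} (ha : IsNilpotent a) {G : A[X]}
    (hG : derivative G = C a * G) (h0 : G.coeff 0 = 1) : G = exp (C a * X) := by
  have hna : IsNilpotent (-a) := ha.neg
  have hcomm : Commute (C a) (exp (C (-a) * X)) :=
    commute_exp_of_commute (((Commute.refl a).neg_right.map C).mul_right (commute_X _).symm)
  have hconst : derivative (exp (C (-a) * X) * G) = 0 := by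
    rw [derivative_mul, derivative_exp_C_mul_X hna, hG, ← mul_assoc, ← hcomm.eq, C_neg]
    noncomm_ring
  have h1 : exp (C (-a) * X) * G = 1 := by
    rw [eq_C_of_derivative_eq_zero hconst, mul_coeff_zero, coeff_zero_exp_C_mul_X hna, h0, mul_one,
      C_1]
  calc G = exp (C a * X) * (exp (C (-a) * X) * G) := by
        rw [← mul_assoc, C_neg, neg_mul, exp_mul_exp_neg_self (isNilpotent_C_mul_X ha), one_mul]
    _ = exp (C a * X) := by rw [h1, mul_one]

end ExpPolynomial

section AbelianIdeal

variable {A : Type*} [Ring A] [Algebra ℚ A] (x a : A)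

-- `LieAlgebra.ad` would need the non-global instance `LieRing.ofAssociativeRing`.
def Ring.ad : Module.End ℚ A := LinearMap.mulLeft ℚ x - LinearMap.mulRight ℚ x

@[simp]
theorem Ring.ad_apply : Ring.ad x a = x * a - a * x := rfl

/- `e^{-t[x,-]} a` and `∫₀ᵗ e^{-s[x,-]} a ds`, truncated at degree `K`, which loses nothing once
`[x,-]^K a = 0`. -/

def expNegAdPoly (K : ℕ) : A[X] :=
  ∑ k ∈ range K, monomial k (((-1) ^ k / k.factorial : ℚ) • (Ring.ad x ^ k) a)

def integralExpNegAdPoly (K : ℕ) : A[X] :=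
  ∑ k ∈ range K,
    monomial (k + 1) (((-1) ^ k / (k + 1).factorial : ℚ) • (Ring.ad x ^ k) a)

variable {x a} {K : ℕ}

theorem Ring.ad_pow_succ_apply (n : ℕ) :
    (Ring.ad x ^ (n + 1)) a = x * (Ring.ad x ^ n) a - (Ring.ad x ^ n) a * x := by
  rw [pow_succ', Module.End.mul_apply, Ring.ad_apply]

theorem Ring.ad_pow_apply_eq_zero_of_le (hK : (Ring.ad x ^ K) a = 0) {n : ℕ} (hn : K ≤ n) :
    (Ring.ad x ^ n) a = 0 := by
  rw [← Nat.sub_add_cancel hn, pow_add, Module.End.mul_apply, hK, map_zero]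

theorem coeff_expNegAdPoly (hK : (Ring.ad x ^ K) a = 0) (n : ℕ) :
    (expNegAdPoly x a K).coeff n = ((-1) ^ n / n.factorial : ℚ) • (Ring.ad x ^ n) a := by
  simp only [expNegAdPoly, finsetSum_coeff, coeff_monomial, sum_ite_eq', mem_range]
  split_ifs with hn
  · rfl
  · rw [Ring.ad_pow_apply_eq_zero_of_le hK (not_lt.mp hn), smul_zero]

theorem derivative_expNegAdPoly (hK : (Ring.ad x ^ K) a = 0) :
    derivative (expNegAdPoly x a K) = expNegAdPoly x a K * C x - C x * expNegAdPoly x a K := by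
  ext n
  have hc : ((n : ℚ) + 1) * ((-1) ^ (n + 1) / (n + 1).factorial) = -((-1) ^ n / n.factorial) := by
    rw [Nat.factorial_succ]
    push_cast
    field_simp
    ring
  rw [coeff_derivative, coeff_sub, coeff_mul_C, coeff_C_mul, coeff_expNegAdPoly hK,
    coeff_expNegAdPoly hK, Ring.ad_pow_succ_apply, ← Nat.cast_succ, mul_natCast_eq_smul,
    smul_smul, Nat.cast_succ, hc, smul_mul_assoc, mul_smul_comm, ← smul_sub, neg_smul, ← smul_neg,
    neg_sub]

theorem derivative_integralExpNegAdPoly :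
    derivative (integralExpNegAdPoly x a K) = expNegAdPoly x a K := by
  simp only [integralExpNegAdPoly, expNegAdPoly, map_sum, derivative_monomial,
    Nat.add_sub_cancel]
  refine sum_congr rfl fun k _ => ?_
  rw [mul_natCast_eq_smul, smul_smul, Nat.factorial_succ]
  congr 2
  push_cast
  field_simp

-- `e^{tx} (e^{-t[x,-]} a) e^{-tx}` has derivative zero, so it equals its value `a` at `t = 0`.
theorem exp_C_mul_X_mul_expNegAdPoly (hx : IsNilpotent x) (hK : (Ring.ad x ^ K) a = 0) :
    exp (C x * X) * expNegAdPoly x a K = C a * exp (C x * X) := by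
  set E := exp (C x * X)
  set E' := exp (C (-x) * X)
  set U := expNegAdPoly x a K
  have hE : Commute (C x) E :=
    commute_exp_of_commute (((Commute.refl x).map C).mul_right (commute_X _).symm)
  have hE' : derivative E' = -C x * E' := by rw [← C_neg]; exact derivative_exp_C_mul_X hx.neg
  have hW : derivative (E * U * E') = 0 := calc
    derivative (E * U * E') = (C x * E - E * C x) * U * E' := by
      rw [derivative_mul, derivative_mul, derivative_exp_C_mul_X hx, hE', derivative_expNegAdPoly hK]
      noncomm_ring
    _ = 0 := by rw [hE.eq, sub_self, zero_mul, zero_mul]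
  have hW0 : E * U * E' = C a := by
    rw [eq_C_of_derivative_eq_zero hW, mul_coeff_zero, mul_coeff_zero, coeff_zero_exp_C_mul_X hx,
      coeff_zero_exp_C_mul_X hx.neg, coeff_expNegAdPoly hK]
    simp
  have hE'E : E' * E = 1 := by
    simp only [E, E', C_neg, neg_mul, exp_neg_mul_exp_self (isNilpotent_C_mul_X hx)]
  calc E * U = E * U * (E' * E) := by rw [hE'E, mul_one]
    _ = C a * E := by rw [← mul_assoc, hW0]

theorem eval_one_integralExpNegAdPoly :
    (integralExpNegAdPoly x a K).eval 1 =
      aeval (Ring.ad x) (PowerSeries.trunc K oneSubExpNegDivX) a := by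
  simp only [integralExpNegAdPoly, eval_finsetSum, eval_monomial, one_pow, mul_one, aeval_trunc,
    LinearMap.sum_apply, LinearMap.smul_apply, oneSubExpNegDivX, PowerSeries.coeff_mk]

theorem exp_add_eq_exp_mul_exp_aeval_oneSubExpNegDivX (hx : IsNilpotent x)
    (hxa : IsNilpotent (x + a)) (hK : (Ring.ad x ^ K) a = 0)
    (hcomm : ∀ m n, Commute ((Ring.ad x ^ m) a) ((Ring.ad x ^ n) a))
    (hnil : ∀ n, IsNilpotent ((Ring.ad x ^ n) a)) :
    exp (x + a) = exp x * exp (aeval (Ring.ad x) (PowerSeries.trunc K oneSubExpNegDivX) a) := by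
  set V := integralExpNegAdPoly x a K
  have hsummands : ∀ i j (c d : ℚ) (m n : ℕ),
      Commute (monomial m (c • (Ring.ad x ^ i) a)) (monomial n (d • (Ring.ad x ^ j) a)) :=
    fun i j _ _ _ _ => commute_monomial_of_commute (((hcomm i j).smul_left _).smul_right _) _ _
  have hVU : Commute V (expNegAdPoly x a K) :=
    Commute.sum_left _ _ _ fun i _ => Commute.sum_right _ _ _ fun j _ => hsummands ..
  have hV : IsNilpotent V := by
    refine Commute.isNilpotent_sum (fun k _ => ?_) fun i j _ _ => hsummands ..
    obtain ⟨m, hm⟩ := hnil k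
    exact ⟨m, by rw [monomial_pow, _root_.smul_pow, hm, smul_zero, monomial_zero_right]⟩
  have hexpV : derivative (exp V) = expNegAdPoly x a K * exp V := by
    rw [derivative_exp hV (by rwa [derivative_integralExpNegAdPoly]),
      derivative_integralExpNegAdPoly]
  have hG : exp (C x * X) * exp V = exp (C (x + a) * X) := by
    refine eq_exp_C_mul_X_of_derivative hxa ?_ ?_
    · rw [derivative_mul, derivative_exp_C_mul_X hx, hexpV, ← mul_assoc,
        exp_C_mul_X_mul_expNegAdPoly hx hK, C_add]
      noncomm_ring
    · rw [mul_coeff_zero, coeff_zero_exp_C_mul_X hx, coeff_zero_exp hV (by simp [V,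
        integralExpNegAdPoly, finsetSum_coeff, coeff_monomial]), one_mul]
  have hs : ∀ b : A, Commute b 1 := Commute.one_right
  calc exp (x + a) = (exp (C (x + a) * X)).eval 1 := by
        rw [eval_exp (isNilpotent_C_mul_X hxa) hs, eval_mul_X, eval_C, mul_one]
    _ = (exp (C x * X)).eval 1 * (exp V).eval 1 := by
        rw [← hG]; exact eval₂_mul_noncomm _ _ fun _ => hs _
    _ = exp x * exp (V.eval 1) := by
        rw [eval_exp (isNilpotent_C_mul_X hx) hs, eval_exp hV hs, eval_mul_X, eval_C, mul_one]
    _ = _ := by rw [eval_one_integralExpNegAdPoly]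

end AbelianIdeal

theorem sgn_one : sgn 1 = -1 := by rw [sgn, if_neg (by decide)]

namespace CurvedLS

variable {L : CurvedLS}

theorem mem_P_of_mem_comp {k : ℤ} {p : ZMod 2} {v : L.V} (h : v ∈ L.comp k p) : v ∈ L.P p :=
  Submodule.mem_iSup_of_mem k h

theorem br_mem_comp_neg_one {u v : L.V} (hu : u ∈ L.comp (-1) 1) (hv : v ∈ L.comp (-1) 1) :
    L.br u v ∈ L.comp (-1) 1 := by
  have := L.br_mem _ _ _ _ u v hu hv
  rwa [show (-1 : ℤ) + -1 + 1 = -1 by norm_num, show (1 : ZMod 2) + 1 + 1 = 1 by decide] at this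

theorem ad_br_of_odd {u : L.V} (hu : u ∈ L.P 1) (v : L.V) :
    L.ad (L.br u v) = Ring.ad (L.ad u) (L.ad v) := by
  ext w
  have := L.jacobi 1 u v w hu
  rw [sgn_one, neg_neg, one_smul] at this
  simp only [ad, Ring.ad_apply, LinearMap.sub_apply, Module.End.mul_apply, this,
    add_sub_cancel_right]

theorem ad_pow_apply_of_odd {u : L.V} (hu : u ∈ L.P 1) (v : L.V) (n : ℕ) :
    (Ring.ad (L.ad u) ^ n) (L.ad v) = L.ad ((L.ad u ^ n) v) := by
  induction n with
  | zero => rfl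
  | succ n ih =>
    rw [pow_succ', Module.End.mul_apply, ih, pow_succ', Module.End.mul_apply, ← ad_br_of_odd hu]
    rfl

theorem ad_aeval_of_odd {u : L.V} (hu : u ∈ L.P 1) (p : ℚ[X]) (v : L.V) :
    L.ad (aeval (L.ad u) p v) = aeval (Ring.ad (L.ad u)) p (L.ad v) := by
  simp only [aeval_eq_sum_range, LinearMap.sum_apply, LinearMap.smul_apply,
    ad_pow_apply_of_odd hu]
  simp only [ad, map_sum, map_smul]

theorem commute_ad_of_br_eq_zero {u v : L.V} (hu : u ∈ L.P 1) (huv : L.br u v = 0) :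
    Commute (L.ad u) (L.ad v) := by
  have := ad_br_of_odd hu v
  rw [huv, ad, map_zero, Ring.ad_apply] at this
  exact sub_eq_zero.mp this.symm

theorem expAd_eq_exp {u : L.V} (h : IsNilpotent (L.ad u)) : L.expAd u = exp (L.ad u) := by
  obtain ⟨K, hK⟩ := h
  exact (finsum_smul_pow_eq_sum hK _).trans (exp_eq_sum hK).symm

theorem toddOp_eq_aeval {y : L.V} {K : ℕ} (hK : L.ad y ^ K = 0) :
    L.toddOp y = aeval (L.ad y) (PowerSeries.trunc K (bernoulli'PowerSeries ℚ)) := by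
  rw [toddOp, aeval_trunc, ← finsum_smul_pow_eq_sum hK]
  refine finsum_congr fun n => ?_
  simp [smul_smul, bernoulli'PowerSeries, div_eq_mul_inv]

variable (L) in
def adOrbitSpan (y z : L.V) : Submodule ℚ L.V :=
  Submodule.span ℚ (Set.range fun n : ℕ => (L.ad y ^ n) z)

variable {y z : L.V}

theorem mem_adOrbitSpan_self : z ∈ L.adOrbitSpan y z :=
  Submodule.subset_span ⟨0, rfl⟩

theorem pow_apply_mem_adOrbitSpan {v : L.V} (hv : v ∈ L.adOrbitSpan y z) (n : ℕ) :
    (L.ad y ^ n) v ∈ L.adOrbitSpan y z := by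
  have hmap : (L.adOrbitSpan y z).map (L.ad y) ≤ L.adOrbitSpan y z :=
    (Submodule.map_span_le _ _ _).mpr <| Set.forall_mem_range.mpr fun m =>
      Submodule.subset_span ⟨m + 1, by simp only [pow_succ', Module.End.mul_apply]⟩
  induction n with
  | zero => exact hv
  | succ n ih => rw [pow_succ', Module.End.mul_apply]; exact hmap ⟨_, ih, rfl⟩

theorem aeval_apply_mem_adOrbitSpan {v : L.V} (hv : v ∈ L.adOrbitSpan y z) (p : ℚ[X]) :
    aeval (L.ad y) p v ∈ L.adOrbitSpan y z := by
  rw [aeval_eq_sum_range, LinearMap.sum_apply]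
  exact Submodule.sum_mem _ fun i _ => Submodule.smul_mem _ _ (pow_apply_mem_adOrbitSpan hv i)

theorem adOrbitSpan_le_comp (hy : y ∈ L.comp (-1) 1) (hz : z ∈ L.comp (-1) 1) :
    L.adOrbitSpan y z ≤ L.comp (-1) 1 := by
  refine Submodule.span_le.mpr <| Set.range_subset_iff.mpr fun n => ?_
  induction n with
  | zero => exact hz
  | succ n ih => rw [pow_succ', Module.End.mul_apply]; exact br_mem_comp_neg_one hy ih

theorem br_pow_apply_pow_apply_eq_zero (hy : y ∈ L.P 1)
    (h : ∀ n : ℕ, L.ad z ((L.ad y ^ n) z) = 0) (m n : ℕ) :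
    L.br ((L.ad y ^ m) z) ((L.ad y ^ n) z) = 0 := by
  induction m generalizing n with
  | zero => exact h n
  | succ m ih =>
    have hs : ∀ k, (L.ad y ^ (k + 1)) z = L.br y ((L.ad y ^ k) z) := fun k => by
      rw [pow_succ', Module.End.mul_apply]; rfl
    have hder := LinearMap.congr_fun (ad_br_of_odd hy ((L.ad y ^ m) z)) ((L.ad y ^ n) z)
    simp only [ad, Ring.ad_apply, LinearMap.sub_apply, Module.End.mul_apply] at hder ih hs ⊢
    rw [hs, hder, ih, ← hs, ih, map_zero, sub_zero]

theorem br_eq_zero_of_mem_adOrbitSpan (hy : y ∈ L.P 1) (h : ∀ n : ℕ, L.ad z ((L.ad y ^ n) z) = 0)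
    {u v : L.V} (hu : u ∈ L.adOrbitSpan y z) (hv : v ∈ L.adOrbitSpan y z) : L.br u v = 0 := by
  have hgen : ∀ m, L.br ((L.ad y ^ m) z) v = 0 := fun m =>
    LinearMap.eqOn_span (g := 0) (Set.forall_mem_range.mpr (br_pow_apply_pow_apply_eq_zero hy h m))
      hv
  exact LinearMap.eqOn_span (f := L.br.flip v) (g := 0) (Set.forall_mem_range.mpr hgen) hu

theorem expAd_add_of_mem_adOrbitSpan (hnil : L.NilpotentCLS) (hy : y ∈ L.comp (-1) 1)
    (hz : z ∈ L.comp (-1) 1) (h : ∀ n : ℕ, L.ad z ((L.ad y ^ n) z) = 0) {K : ℕ}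
    (hK : L.ad y ^ K = 0) {w : L.V} (hw : w ∈ L.adOrbitSpan y z) :
    L.expAd (y + w) =
      L.expAd y * L.expAd (aeval (L.ad y) (PowerSeries.trunc K oneSubExpNegDivX) w) := by
  have hyP := mem_P_of_mem_comp hy
  have hodd : ∀ v ∈ L.adOrbitSpan y z, v ∈ L.P 1 := fun v hv =>
    mem_P_of_mem_comp (adOrbitSpan_le_comp hy hz hv)
  have hY := ad_pow_apply_of_odd hyP w
  have hTw := pow_apply_mem_adOrbitSpan hw
  have hadd : L.ad (y + w) = L.ad y + L.ad w := map_add L.br y w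
  have hnil_yw := hnil _ (add_mem hyP (hodd w hw))
  rw [expAd_eq_exp hnil_yw, hadd, expAd_eq_exp (hnil y hyP),
    expAd_eq_exp (hnil _ (hodd _ (aeval_apply_mem_adOrbitSpan hw _))), ad_aeval_of_odd hyP]
  refine exp_add_eq_exp_mul_exp_aeval_oneSubExpNegDivX (hnil y hyP) (hadd ▸ hnil_yw) ?_
    (fun m n => ?_) (fun n => ?_)
  · rw [hY, hK, LinearMap.zero_apply, ad, map_zero]
  · rw [hY, hY]
    exact commute_ad_of_br_eq_zero (hodd _ (hTw m))
      (br_eq_zero_of_mem_adOrbitSpan hyP h (hTw m) (hTw n))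
  · rw [hY]
    exact hnil _ (hodd _ (hTw n))

end CurvedLS

/-- if `y, z` are odd elements of `L⁻¹` with `ad z (ad y)ⁿ z = 0`
for all `n ≥ 0`, then `y + (ad y/(1 − e^{−ad y})) z` solves the
Baker–Campbell–Hausdorff equation `e^{ad(y ∗ z)} = e^{ad y} e^{ad z}`, i.e.
`y ∗ z = y + (ad y/(1 − e^{−ad y})) z`. -/
theorem statement3 (L : CurvedLS) (hnil : L.NilpotentCLS) (y z : L.V)
    (hy : y ∈ L.comp (-1) 1) (hz : z ∈ L.comp (-1) 1)
    (h : ∀ n : ℕ, L.ad z (((L.ad y) ^ n) z) = 0) :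
    L.expAd (y + L.toddOp y z) = L.expAd y * L.expAd z := by
  obtain ⟨K, hK⟩ := hnil y (CurvedLS.mem_P_of_mem_comp hy)
  have hK1 : L.ad y ^ (K + 1) = 0 := by rw [_root_.pow_succ, hK, zero_mul]
  have htodd : L.toddOp y z =
      aeval (L.ad y) (PowerSeries.trunc (K + 1) (bernoulli'PowerSeries ℚ)) z := by
    rw [CurvedLS.toddOp_eq_aeval hK1]
  rw [CurvedLS.expAd_add_of_mem_adOrbitSpan hnil hy hz h hK1
      (htodd ▸ CurvedLS.aeval_apply_mem_adOrbitSpan CurvedLS.mem_adOrbitSpan_self _),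
    htodd, ← Module.End.mul_apply, aeval_trunc_mul_aeval_trunc hK1,
    oneSubExpNegDivX_mul_bernoulli', PowerSeries.trunc_one, map_one, Module.End.one_apply]
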